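/- arXiv:1707.07502 — 4 statements merged into one kernel-verified Lean document; each statement's English description precedes it below -/
import Mathlib

section
/- Let A be a centrally symmetric convex polygon in R² with 2n vertices (indices mod 2n, x_{k+n} = -x_k), n ≥ 4, and fix k. Let T₁(x_{k-1}) be the triangle with vertices x_{k-1}, x_k, x_{k+n-2}, and let T₂(x_k) be the triangle with vertices x_{k-1}, x_k, x_{k+1}. Then area(T₁(x_{k-1})) > area(T₂(x_k)). -/
/-!
Both triangles have the base `[a, b] = [x (k-1), x k]`, and a triangle `p q r` has area
`|cross (q - p) (r - p)|` times the area of the standard triangle, so the claim is that the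
apex `x (k+n-2) = -d` (with `d = x (k-2)`, `c = x (k+1)`) lies strictly higher above the line
`ab` than `c`. Five instances of convexity, read off the vertices `d, a, b, c` and their
antipodes, combine through the identity
`(cross u (-d-a) - cross u (c-a)) * cross (c-b) (-a-b)
  = cross u (c-a) * cross (a-d) (-c-d) + cross u (-c-a) * cross (c-b) (-d-b)`,
`u = b - a`, whose right-hand side is positive.
-/

open MeasureTheory Set
open scoped Pointwise

noncomputable def polarSet {d : ℕ} (A : Set (EuclideanSpace ℝ (Fin d))) :
    Set (EuclideanSpace ℝ (Fin d)) :=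
  {x | ∀ a ∈ A, inner ℝ x a ≤ (1 : ℝ)}

/-- The area (2-dimensional Lebesgue measure) of a subset of the plane. -/
noncomputable def area (S : Set (EuclideanSpace ℝ (Fin 2))) : ℝ :=
  (MeasureTheory.volume S).toReal

/-- The points `x 0, x 1, ..., x (m-1)` are the vertices, in cyclic order, of a convex
polygon: every vertex lies strictly to the left of every directed edge it does not belong to. -/
def IsConvexCyclic {m : ℕ} (x : ZMod m → EuclideanSpace ℝ (Fin 2)) : Prop :=
  ∀ k : ZMod m, ∀ p ∈ Set.range x, p ≠ x k → p ≠ x (k + 1) →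
    0 < (x (k + 1) - x k) 0 * (p - x k) 1 - (x (k + 1) - x k) 1 * (p - x k) 0

local notation "ℝ²" => EuclideanSpace ℝ (Fin 2)

def cross (u v : ℝ²) : ℝ := u 0 * v 1 - u 1 * v 0

theorem cross_lt_cross_neg_sub {a b c d : ℝ²}
    (h₁ : 0 < cross (b - a) (c - a)) (h₂ : 0 < cross (b - a) (-c - a))
    (h₃ : 0 < cross (c - b) (-a - b)) (h₄ : 0 < cross (c - b) (-d - b))
    (h₅ : 0 < cross (a - d) (-c - d)) :
    cross (b - a) (c - a) < cross (b - a) (-d - a) := by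
  have key : (cross (b - a) (-d - a) - cross (b - a) (c - a)) * cross (c - b) (-a - b) =
      cross (b - a) (c - a) * cross (a - d) (-c - d) +
        cross (b - a) (-c - a) * cross (c - b) (-d - b) := by
    simp only [cross, PiLp.sub_apply, PiLp.neg_apply]
    ring
  have hprod : 0 < (cross (b - a) (-d - a) - cross (b - a) (c - a)) * cross (c - b) (-a - b) := by
    rw [key]; positivity
  linarith [pos_of_mul_pos_left hprod h₃.le]

noncomputable def stdTriangle : Set ℝ² :=
  convexHull ℝ {0, EuclideanSpace.single 0 1, EuclideanSpace.single 1 1}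

theorem volume_stdTriangle_pos : 0 < volume stdTriangle := by
  have hint : (interior stdTriangle).Nonempty := by
    rw [stdTriangle, interior_convexHull_nonempty_iff_affineSpan_eq_top,
      AffineSubspace.affineSpan_eq_top_iff_vectorSpan_eq_top_of_nonempty _ _ _ (by simp),
      vectorSpan_eq_span_vsub_set_right ℝ (mem_insert _ _)]
    simp only [vsub_eq_sub, sub_zero, image_id']
    rw [eq_top_iff, ← (EuclideanSpace.basisFun (Fin 2) ℝ).toBasis.span_eq]
    refine Submodule.span_mono ?_
    rintro _ ⟨i, rfl⟩
    fin_cases i <;> simp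
  exact (isOpen_interior.measure_pos volume hint).trans_le (measure_mono interior_subset)

theorem area_stdTriangle_pos : 0 < area stdTriangle :=
  ENNReal.toReal_pos volume_stdTriangle_pos.ne'
    ((toFinite _).isCompact_convexHull (𝕜 := ℝ)).measure_lt_top.ne

noncomputable def linearMapOfColumns (u w : ℝ²) : ℝ² →ₗ[ℝ] ℝ² :=
  Matrix.toLpLin 2 2 (Matrix.of ![![u 0, w 0], ![u 1, w 1]])

theorem det_linearMapOfColumns (u w : ℝ²) :
    LinearMap.det (linearMapOfColumns u w) = cross u w := by
  rw [linearMapOfColumns, Matrix.toLpLin_eq_toLin, LinearMap.det_toLin, Matrix.det_fin_two_of,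
    cross]
  ring

theorem convexHull_triple_eq_vadd_image (p q r : ℝ²) :
    convexHull ℝ {p, q, r} = p +ᵥ linearMapOfColumns (q - p) (r - p) '' stdTriangle := by
  have hcol : ∀ i, linearMapOfColumns (q - p) (r - p) (EuclideanSpace.single i 1) =
      ![q - p, r - p] i := by
    intro i
    ext l
    fin_cases i <;> fin_cases l <;> simp [linearMapOfColumns, Matrix.toLpLin_apply]
  rw [stdTriangle, LinearMap.image_convexHull, ← convexHull_vadd, image_insert_eq,
    image_insert_eq, image_singleton, map_zero, hcol 0, hcol 1, ← image_vadd,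
    image_insert_eq, image_insert_eq, image_singleton]
  simp [vadd_eq_add]

theorem area_convexHull_triple (p q r : ℝ²) :
    area (convexHull ℝ {p, q, r}) = |cross (q - p) (r - p)| * area stdTriangle := by
  rw [area, area, convexHull_triple_eq_vadd_image, measure_vadd, Measure.addHaar_image_linearMap,
    det_linearMapOfColumns, ENNReal.toReal_mul, ENNReal.toReal_ofReal (abs_nonneg _)]

theorem ZMod.natCast_ne_natCast_of_lt {N a b : ℕ} (hab : a < b) (hbN : b < a + N) :
    (b : ZMod N) ≠ a := by
  rw [Ne, ZMod.natCast_eq_natCast_iff, Nat.ModEq.comm, Nat.modEq_iff_dvd' hab.le]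
  intro h
  have := Nat.le_of_dvd (by omega) h
  omega

theorem IsConvexCyclic.cross_pos {N : ℕ} {x : ZMod N → ℝ²} (hcyc : IsConvexCyclic x)
    (hinj : Function.Injective x) (i : ZMod N) {j m : ℕ} (hjm : j + 1 < m) (hmN : m < j + N) :
    0 < cross (x (i + (j + 1 : ℕ)) - x (i + j)) (x (i + m) - x (i + j)) := by
  have hsucc : i + (j : ZMod N) + 1 = i + (j + 1 : ℕ) := by push_cast; ring
  have hne : ∀ l : ℕ, l < m → m < l + N → x (i + m) ≠ x (i + l) := fun l hlm hmN =>
    hinj.ne fun h => ZMod.natCast_ne_natCast_of_lt hlm hmN (add_left_cancel h)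
  have := hcyc (i + j) _ ⟨_, rfl⟩ (hne j (by omega) hmN) (hsucc ▸ hne (j + 1) hjm (by omega))
  rwa [hsucc] at this

/-- In a centrally symmetric convex 2n-gon with n ≥ 4, the triangle with vertices
x (k-1), x k, x (k+n-2) has strictly greater area than the triangle with vertices
x (k-1), x k, x (k+1). -/
theorem stmt8 (n : ℕ) (hn : 4 ≤ n)
    (x : ZMod (2 * n) → EuclideanSpace ℝ (Fin 2))
    (hinj : Function.Injective x)
    (hanti : ∀ k, x (k + (n : ZMod (2 * n))) = -x k)
    (hcyc : IsConvexCyclic x) (k : ZMod (2 * n)) :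
    area (convexHull ℝ {x (k - 1), x k, x (k + 1)}) <
      area (convexHull ℝ {x (k - 1), x k, x (k + (n : ZMod (2 * n)) - 2)}) := by
  set y : ℕ → ℝ² := fun m => x (k - 2 + m) with hy
  have hy_neg : ∀ m, y (n + m) = -y m := fun m => by
    simp only [hy, ← hanti]; congr 1; push_cast; ring
  have hx : x (k - 1) = y 1 ∧ x k = y 2 ∧ x (k + 1) = y 3 ∧ x (k + n - 2) = -y 0 := by
    simp only [hy, ← hanti]; refine ⟨?_, ?_, ?_, ?_⟩ <;> congr 1 <;> push_cast <;> ring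
  obtain ⟨ha, hb, hc, hd⟩ := hx
  have h₁ : 0 < cross (y 2 - y 1) (y 3 - y 1) := hcyc.cross_pos hinj _ (by omega) (by omega)
  have h₂ : 0 < cross (y 2 - y 1) (y (n + 3) - y 1) := hcyc.cross_pos hinj _ (by omega) (by omega)
  have h₃ : 0 < cross (y 3 - y 2) (y (n + 1) - y 2) := hcyc.cross_pos hinj _ (by omega) (by omega)
  have h₄ : 0 < cross (y 3 - y 2) (y (n + 0) - y 2) := hcyc.cross_pos hinj _ (by omega) (by omega)
  have h₅ : 0 < cross (y 1 - y 0) (y (n + 3) - y 0) := hcyc.cross_pos hinj _ (by omega) (by omega)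
  rw [hy_neg] at h₂ h₃ h₄ h₅
  rw [ha, hb, hc, hd, area_convexHull_triple, area_convexHull_triple]
  refine mul_lt_mul_of_pos_right ?_ area_stdTriangle_pos
  have hlt := cross_lt_cross_neg_sub h₁ h₂ h₃ h₄ h₅
  rwa [abs_of_pos h₁, abs_of_pos (h₁.trans hlt)]
end

section
/- Let A be a centrally symmetric convex polygon in R², suppose the edge s ∈ E(A) is horizontal, let s' be an edge adjacent to s, and let z be the intersection of the vertical axis with the line containing s'. Write each edge t of A as lying in the line {x : ⟨x, u(t)⟩ = c(t)} with u(t) a unit normal and c(t) > 0, and let v°(t) = u(t)/c(t) be the corresponding vertex of the polar polygon A°. Let α be the vertical distance from z to the line containing s, β the vertical distance from v°(s) to v°(s'), and γ the vertical distance from v°(s') to the origin. Then α/c(s) = β/γ. -/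
open MeasureTheory Set

theorem EuclideanSpace.norm_eq_abs_apply_one_of_apply_zero_eq_zero
    {v : EuclideanSpace ℝ (Fin 2)} (hv : v 0 = 0) : ‖v‖ = |v 1| := by
  rw [EuclideanSpace.norm_eq, Fin.sum_univ_two, hv]
  simp only [norm_zero, Real.norm_eq_abs, sq_abs, ne_eq, OfNat.ofNat_ne_zero,
    not_false_eq_true, zero_pow, zero_add, Real.sqrt_sq_eq_abs]

/- With `a = ±1` both sides equal `|a c' / b - c| / c`. -/
theorem abs_div_sub_div_div_eq {a b c c' : ℝ} (ha : |a| = 1) (hb : b ≠ 0) (hc : 0 < c)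
    (hc' : c' ≠ 0) : |c' / b - c / a| / c = |a / c - b / c'| / |b / c'| := by
  have ha₀ : a ≠ 0 := by rintro rfl; simp at ha
  have key : (c' / b - c / a) * a / c = (a / c - b / c') / (b / c') := by
    field_simp
  rw [← abs_div, ← key, abs_div, abs_mul, ha, mul_one, abs_of_pos hc]

theorem stmt10_general (n : ℕ)
    (u : ZMod (2 * n) → EuclideanSpace ℝ (Fin 2)) (c : ZMod (2 * n) → ℝ)
    (hu : ∀ j, ‖u j‖ = 1) (hc : ∀ j, 0 < c j)
    (k : ZMod (2 * n))
    (hhor : u k 0 = 0)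
    (z₂ : ℝ) (hz : u (k + 1) 1 * z₂ = c (k + 1))
    (α β γ : ℝ)
    (hα : α = |z₂ - c k / u k 1|)
    (hβ : β = |u k 1 / c k - u (k + 1) 1 / c (k + 1)|)
    (hγ : γ = |u (k + 1) 1 / c (k + 1)|) :
    α / c k = β / γ := by
  have hb : u (k + 1) 1 ≠ 0 := by
    rintro hb
    rw [hb, zero_mul] at hz
    exact (hc (k + 1)).ne' hz.symm
  have hz₂ : z₂ = c (k + 1) / u (k + 1) 1 := by
    rw [eq_div_iff hb, mul_comm, hz]
  have hs : |u k 1| = 1 := by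
    rw [← EuclideanSpace.norm_eq_abs_apply_one_of_apply_zero_eq_zero hhor, hu]
  rw [hα, hβ, hγ, hz₂]
  exact abs_div_sub_div_div_eq hs hb (hc k) (hc (k + 1)).ne'

/-- Lemma 3.1 of the paper: with s = edge k horizontal, s' = edge k+1 adjacent to it,
z = (0, z₂) the intersection of the vertical axis with the line of s', α the vertical
distance from z to the line of s, β the vertical distance from v°(s) to v°(s'), and γ the
vertical distance from v°(s') to the origin, we have α / c(s) = β / γ.  Here edge j of the
polygon lies in the line {p : ⟪u j, p⟫ = c j} with unit outer normal u j and c j > 0, and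
v°(j) = (c j)⁻¹ • u j is the corresponding vertex of the polar polygon. -/
theorem stmt10 (n : ℕ) (hn : 2 ≤ n)
    (x u : ZMod (2 * n) → EuclideanSpace ℝ (Fin 2)) (c : ZMod (2 * n) → ℝ)
    (hinj : Function.Injective x)
    (hanti : ∀ k, x (k + (n : ZMod (2 * n))) = -x k)
    (hcyc : IsConvexCyclic x)
    (hu : ∀ j, ‖u j‖ = 1) (hc : ∀ j, 0 < c j)
    (hedge : ∀ j, inner ℝ (u j) (x (j - 1)) = c j ∧ inner ℝ (u j) (x j) = c j)
    (k : ZMod (2 * n))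
    (hhor : u k 0 = 0)
    (z₂ : ℝ) (hz : u (k + 1) 1 * z₂ = c (k + 1))
    (α β γ : ℝ)
    (hα : α = |z₂ - c k / u k 1|)
    (hβ : β = |u k 1 / c k - u (k + 1) 1 / c (k + 1)|)
    (hγ : γ = |u (k + 1) 1 / c (k + 1)|) :
    α / c k = β / γ :=
  stmt10_general n u c hu hc k hhor z₂ hz α β γ hα hβ hγ
end

section
/- Let A be a centrally symmetric convex polygon in R² and let s be a horizontal edge of A such that the two lines containing the edges adjacent to s intersect on the vertical axis. Then the two vertices of the polar polygon A° adjacent to v°(s) have equal second coordinates (they lie on a common horizontal line). -/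
open MeasureTheory Set

open scoped RealInnerProductSpace

lemma EuclideanSpace.inner_eq_mul_of_apply_zero_eq_zero {u z : EuclideanSpace ℝ (Fin 2)}
    (hz0 : z 0 = 0) : ⟪u, z⟫ = u 1 * z 1 := by
  simp [PiLp.inner_apply, Fin.sum_univ_two, hz0, mul_comm]

lemma EuclideanSpace.smul_apply_one_eq_inv_of_inner_eq {u z : EuclideanSpace ℝ (Fin 2)} {c : ℝ}
    (hc : c ≠ 0) (hz0 : z 0 = 0) (hz : ⟪u, z⟫ = c) : (c⁻¹ • u) 1 = (z 1)⁻¹ := by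
  rw [inner_eq_mul_of_apply_zero_eq_zero hz0] at hz
  have hu1 : u 1 ≠ 0 := left_ne_zero_of_mul (hz ▸ hc)
  rw [PiLp.smul_apply, smul_eq_mul, ← hz]
  field_simp

theorem stmt11_general (n : ℕ)
    (u : ZMod (2 * n) → EuclideanSpace ℝ (Fin 2)) (c : ZMod (2 * n) → ℝ)
    (hc : ∀ j, 0 < c j)
    (k : ZMod (2 * n))
    (z : EuclideanSpace ℝ (Fin 2)) (hz0 : z 0 = 0)
    (hz1 : inner ℝ (u (k - 1)) z = c (k - 1)) (hz2 : inner ℝ (u (k + 1)) z = c (k + 1)) :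
    ((c (k - 1))⁻¹ • u (k - 1)) 1 = ((c (k + 1))⁻¹ • u (k + 1)) 1 := by
  rw [EuclideanSpace.smul_apply_one_eq_inv_of_inner_eq (hc _).ne' hz0 hz1,
    EuclideanSpace.smul_apply_one_eq_inv_of_inner_eq (hc _).ne' hz0 hz2]

/-- If s = edge k of a centrally symmetric convex polygon is horizontal and the lines
containing the two adjacent edges meet on the vertical axis, then the two vertices of the
polar polygon adjacent to v°(s), namely v°(k-1) = (c (k-1))⁻¹ • u (k-1) and
v°(k+1) = (c (k+1))⁻¹ • u (k+1), have equal second coordinates. -/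
theorem stmt11 (n : ℕ) (hn : 2 ≤ n)
    (x u : ZMod (2 * n) → EuclideanSpace ℝ (Fin 2)) (c : ZMod (2 * n) → ℝ)
    (hinj : Function.Injective x)
    (hanti : ∀ k, x (k + (n : ZMod (2 * n))) = -x k)
    (hcyc : IsConvexCyclic x)
    (hu : ∀ j, ‖u j‖ = 1) (hc : ∀ j, 0 < c j)
    (hedge : ∀ j, inner ℝ (u j) (x (j - 1)) = c j ∧ inner ℝ (u j) (x j) = c j)
    (k : ZMod (2 * n))
    (hhor : u k 0 = 0)
    (z : EuclideanSpace ℝ (Fin 2)) (hz0 : z 0 = 0)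
    (hz1 : inner ℝ (u (k - 1)) z = c (k - 1)) (hz2 : inner ℝ (u (k + 1)) z = c (k + 1)) :
    ((c (k - 1))⁻¹ • u (k - 1)) 1 = ((c (k + 1))⁻¹ • u (k + 1)) 1 :=
  stmt11_general n u c hc k z hz0 hz1 hz2
end

section
/- For every centrally symmetric convex body A in R², the Mahler volume satisfies M(A) ≥ 8 = M([-1,1]²), i.e., the two-dimensional Mahler conjecture holds. -/
/-!
Both `M(A)` and the hypotheses are invariant under invertible linear maps. If `u, v ∈ A` maximise
`|det (u, v)|` over `A × A`, the linear map sending `u, v` to `e₁, e₂` carries `A` to a body `B`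
with `e₁, e₂ ∈ B ⊆ [-1, 1]²`.

For such `B`, let `s₁, s₂` be its areas in the quadrants `{x₀, x₁ ≥ 0}` and `{x₀ ≥ 0 ≥ x₁}`. For
`a ∈ B` in the first quadrant, `B` contains the quadrilateral `0 e₁ a e₂` of area `(a₀ + a₁) / 2`,
so `a₀ + a₁ ≤ 2 s₁`; this also holds off that quadrant, because `B` lies in the square and
`s₁ ≥ 1/2`. Hence `(1, 1) / (2 s₁) ∈ B°`, and since `e₁, e₂ ∈ B°` as well, the same quadrilateral
bound gives `B°` area at least `1 / (2 s₁)` in the first quadrant. Doing the same in the other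
quadrant and using central symmetry, `M(B) ≥ 2 (s₁ + s₂) · (1 / s₁ + 1 / s₂) ≥ 8`.
-/

open MeasureTheory Set

open Topology Filter
open scoped InnerProductSpace

theorem LinearMap.det_adjoint {E : Type*} [NormedAddCommGroup E] [InnerProductSpace ℝ E]
    [FiniteDimensional ℝ E] (T : E →ₗ[ℝ] E) :
    LinearMap.det (LinearMap.adjoint T) = LinearMap.det T := by
  let b := stdOrthonormalBasis ℝ E
  rw [← LinearMap.det_toMatrix b.toBasis, LinearMap.toMatrix_adjoint, Matrix.det_conjTranspose,
    LinearMap.det_toMatrix, star_trivial]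

theorem add_measure_le_measure_union_of_subset_halfSpaces {E : Type*} [NormedAddCommGroup E]
    [InnerProductSpace ℝ E] [FiniteDimensional ℝ E] [MeasurableSpace E] [BorelSpace E]
    (μ : Measure E) [μ.IsAddHaarMeasure] {v : E} (hv : v ≠ 0) {S T : Set E}
    (hS : S ⊆ {x | 0 ≤ ⟪v, x⟫_ℝ}) (hT : T ⊆ {x | ⟪v, x⟫_ℝ ≤ 0}) :
    μ S + μ T ≤ μ (S ∪ T) := by
  have hyperplane : μ (ℝ ∙ v)ᗮ = 0 := by
    refine Measure.addHaar_submodule μ _ fun htop => hv ?_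
    rwa [Submodule.orthogonal_eq_top_iff, Submodule.span_singleton_eq_bot] at htop
  have hH : MeasurableSet {x | ⟪v, x⟫_ℝ ≤ 0} :=
    (isClosed_le (continuous_const.inner continuous_id) continuous_const).measurableSet
  calc μ S + μ T = μ (S \ (ℝ ∙ v)ᗮ) + μ T := by rw [measure_sdiff_null hyperplane]
    _ ≤ μ ((S ∪ T) \ {x | ⟪v, x⟫_ℝ ≤ 0}) + μ ((S ∪ T) ∩ {x | ⟪v, x⟫_ℝ ≤ 0}) := by
      refine add_le_add (measure_mono ?_) (measure_mono ?_)
      · rintro x ⟨hxS, hxv⟩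
        rw [SetLike.mem_coe, Submodule.mem_orthogonal_singleton_iff_inner_right] at hxv
        exact ⟨Or.inl hxS, not_le.2 (lt_of_le_of_ne (hS hxS) (Ne.symm hxv))⟩
      · exact fun x hx => ⟨Or.inr hx, hT hx⟩
    _ = μ (S ∪ T) := measure_sdiff_add_inter _ hH

section Polar

variable {d : ℕ}

theorem polarSet_eq_iInter (A : Set (EuclideanSpace ℝ (Fin d))) :
    polarSet A = ⋂ a ∈ A, {x | ⟪x, a⟫_ℝ ≤ 1} := by
  ext; simp [polarSet]

theorem convex_polarSet (A : Set (EuclideanSpace ℝ (Fin d))) : Convex ℝ (polarSet A) := by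
  rw [polarSet_eq_iInter]
  exact convex_iInter₂ fun a _ =>
    convex_halfSpace_le ⟨fun x y => inner_add_left x y a, fun c x => real_inner_smul_left x a c⟩ 1

theorem zero_mem_polarSet (A : Set (EuclideanSpace ℝ (Fin d))) : 0 ∈ polarSet A := by
  simp [polarSet]

theorem neg_mem_polarSet {A : Set (EuclideanSpace ℝ (Fin d))} (hA : ∀ a ∈ A, -a ∈ A)
    {x : EuclideanSpace ℝ (Fin d)} (hx : x ∈ polarSet A) : -x ∈ polarSet A := fun a ha => by
  simpa [inner_neg_left, inner_neg_right] using hx (-a) (hA a ha)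

theorem polarSet_image_linearMap (T : EuclideanSpace ℝ (Fin d) →ₗ[ℝ] EuclideanSpace ℝ (Fin d))
    (A : Set (EuclideanSpace ℝ (Fin d))) :
    polarSet (T '' A) = LinearMap.adjoint T ⁻¹' polarSet A := by
  ext x
  simp [polarSet, LinearMap.adjoint_inner_left]

theorem volume_mul_volume_polarSet_image
    {T : EuclideanSpace ℝ (Fin d) →ₗ[ℝ] EuclideanSpace ℝ (Fin d)} (hT : LinearMap.det T ≠ 0)
    (K : Set (EuclideanSpace ℝ (Fin d))) :
    volume (T '' K) * volume (polarSet (T '' K)) = volume K * volume (polarSet K) := by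
  rw [polarSet_image_linearMap, Measure.addHaar_image_linearMap,
    Measure.addHaar_preimage_linearMap _ (by rwa [LinearMap.det_adjoint]), LinearMap.det_adjoint,
    mul_mul_mul_comm, ← ENNReal.ofReal_mul (abs_nonneg _), abs_inv,
    mul_inv_cancel₀ (abs_ne_zero.2 hT), ENNReal.ofReal_one, one_mul]

end Polar

theorem volume_setOf_forall_mem_Icc {ι : Type*} [Fintype ι] (a b : ℝ) :
    volume {x : EuclideanSpace ℝ ι | ∀ i, x i ∈ Icc a b} =
      ENNReal.ofReal (b - a) ^ Fintype.card ι := by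
  have : {x : EuclideanSpace ℝ ι | ∀ i, x i ∈ Icc a b} =
      WithLp.ofLp ⁻¹' Icc (fun _ => a) (fun _ => b) := by
    ext x; simp [Pi.le_def, forall_and]
  rw [this, (PiLp.volume_preserving_ofLp ι).measure_preimage measurableSet_Icc.nullMeasurableSet,
    Real.volume_Icc_pi, Finset.prod_const, Finset.card_univ]

def cube (d : ℕ) : Set (EuclideanSpace ℝ (Fin d)) := {x | ∀ i, |x i| ≤ 1}

theorem volume_cube (d : ℕ) : volume (cube d) = 2 ^ d := by
  have : cube d = {x : EuclideanSpace ℝ (Fin d) | ∀ i, x i ∈ Icc (-1) 1} := by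
    ext x; simp [cube, abs_le]
  rw [this, volume_setOf_forall_mem_Icc]
  norm_num

local notation "E2" => EuclideanSpace ℝ (Fin 2)

theorem EuclideanSpace.inner_fin_two (x y : E2) : ⟪x, y⟫_ℝ = x 0 * y 0 + x 1 * y 1 := by
  simp [PiLp.inner_apply, Fin.sum_univ_two, mul_comm]

def det2 (a b : E2) : ℝ := a 0 * b 1 - a 1 * b 0

noncomputable def colMap (a b : E2) : E2 →ₗ[ℝ] E2 :=
  (EuclideanSpace.proj 0 : E2 →L[ℝ] ℝ).toLinearMap.smulRight a +
    (EuclideanSpace.proj 1 : E2 →L[ℝ] ℝ).toLinearMap.smulRight b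

@[simp]
theorem colMap_apply (a b x : E2) : colMap a b x = x 0 • a + x 1 • b := rfl

theorem det_colMap (a b : E2) : LinearMap.det (colMap a b) = det2 a b := by
  rw [← LinearMap.det_toMatrix (EuclideanSpace.basisFun (Fin 2) ℝ).toBasis, Matrix.det_fin_two]
  simp [LinearMap.toMatrix_apply, det2]
  ring

theorem det2_colMap (u v a b : E2) :
    det2 (colMap u v a) (colMap u v b) = det2 u v * det2 a b := by
  simp [det2]; ring

theorem volume_colMap_image (a b : E2) (s : Set E2) :
    volume (colMap a b '' s) = ENNReal.ofReal |det2 a b| * volume s := by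
  rw [Measure.addHaar_image_linearMap, det_colMap]

def stdTri : Set E2 := {y | 0 ≤ y 0 ∧ 0 ≤ y 1 ∧ y 0 + y 1 ≤ 1}

theorem colMap_image_stdTri_subset {C : Set E2} (hC : Convex ℝ C) (h0 : 0 ∈ C) {a b : E2}
    (ha : a ∈ C) (hb : b ∈ C) : colMap a b '' stdTri ⊆ C := by
  rintro _ ⟨y, ⟨hy0, hy1, hy⟩, rfl⟩
  have := hC.sum_mem (t := Finset.univ) (w := ![y 0, y 1, 1 - y 0 - y 1]) (z := ![a, b, 0])
    (by simp [Fin.forall_fin_succ, hy0, hy1]; linarith) (by simp [Fin.sum_univ_three])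
    (by simp [Fin.forall_fin_succ, ha, hb, h0])
  simpa [Fin.sum_univ_three] using this

-- The diagonal cuts the unit square into two images of `stdTri` under maps of determinant 1.
theorem inv_two_le_volume_stdTri : 2⁻¹ ≤ volume stdTri := by
  have hsquare : {x : E2 | ∀ i, x i ∈ Icc 0 1} ⊆
      colMap !₂[1, 0] !₂[1, 1] '' stdTri ∪ colMap !₂[1, 1] !₂[0, 1] '' stdTri := by
    intro x hx
    obtain ⟨⟨hx0, hx0'⟩, ⟨hx1, hx1'⟩⟩ := And.intro (hx 0) (hx 1)
    rcases le_total (x 1) (x 0) with h | h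
    · refine Or.inl ⟨!₂[x 0 - x 1, x 1],
        ⟨by simpa using h, by simpa using hx1, by simpa using hx0'⟩, ?_⟩
      ext i; fin_cases i <;> simp
    · refine Or.inr ⟨!₂[x 0, x 1 - x 0],
        ⟨by simpa using hx0, by simpa using h, by simpa using hx1'⟩, ?_⟩
      ext i; fin_cases i <;> simp
  rw [ENNReal.inv_le_iff_le_mul (fun _ => two_ne_zero) (fun h => absurd h ENNReal.ofNat_ne_top)]
  calc (1 : ENNReal) = volume {x : E2 | ∀ i, x i ∈ Icc 0 1} := by
        rw [volume_setOf_forall_mem_Icc]; simp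
    _ ≤ volume (colMap !₂[1, 0] !₂[1, 1] '' stdTri) + volume (colMap !₂[1, 1] !₂[0, 1] '' stdTri) :=
        (measure_mono hsquare).trans (measure_union_le _ _)
    _ = 2 * volume stdTri := by
        rw [volume_colMap_image, volume_colMap_image]
        simp [det2, two_mul]

def quadrant (ε : ℝ) : Set E2 := {x | 0 ≤ x 0 ∧ 0 ≤ ε * x 1}

theorem convex_quadrant (ε : ℝ) : Convex ℝ (quadrant ε) := by
  rintro x ⟨hx0, hx1⟩ y ⟨hy0, hy1⟩ a b ha hb -
  refine ⟨?_, ?_⟩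
  · simpa using add_nonneg (mul_nonneg ha hx0) (mul_nonneg hb hy0)
  · have := add_nonneg (mul_nonneg ha hx1) (mul_nonneg hb hy1)
    simp only [PiLp.add_apply, PiLp.smul_apply, smul_eq_mul]
    linarith

theorem le_volume_inter_quadrant {C : Set E2} (hC : Convex ℝ C) (h0 : 0 ∈ C) {ε : ℝ}
    (hε : |ε| = 1) (he1 : !₂[1, 0] ∈ C) (he2 : !₂[0, ε] ∈ C) {z : E2} (hz : z ∈ C)
    (hzQ : z ∈ quadrant ε) :
    ENNReal.ofReal ((z 0 + ε * z 1) / 2) ≤ volume (C ∩ quadrant ε) := by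
  obtain ⟨hz0, hz1⟩ := hzQ
  have hεε : ε * ε = 1 := by rw [← abs_mul_abs_self, hε, one_mul]
  by_cases hzero : z = 0
  · simp [hzero]
  -- The triangles `0 e₁ z` and `0 z (0, ε)` lie on opposite sides of the line `ℝ z`.
  have hv : !₂[ε * z 1, -(ε * z 0)] ≠ 0 := by
    refine fun h => hzero ?_
    have hε0 : ε ≠ 0 := by rintro rfl; simp at hε
    ext i; fin_cases i
    · simpa [hε0] using congrArg (· 1) h
    · simpa [hε0] using congrArg (· 0) h
  have hCQ := hC.inter (convex_quadrant ε)
  have h1 := colMap_image_stdTri_subset hCQ ⟨h0, by simp [quadrant]⟩ ⟨he1, by simp [quadrant]⟩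
    ⟨hz, hz0, hz1⟩
  have h2 := colMap_image_stdTri_subset hCQ ⟨h0, by simp [quadrant]⟩ ⟨hz, hz0, hz1⟩
    ⟨he2, by simp [quadrant, hεε]⟩
  calc ENNReal.ofReal ((z 0 + ε * z 1) / 2)
      ≤ ENNReal.ofReal (ε * z 1) * volume stdTri + ENNReal.ofReal (z 0) * volume stdTri := by
        rw [← add_mul, ← ENNReal.ofReal_add hz1 hz0, div_eq_mul_inv,
          ENNReal.ofReal_mul (add_nonneg hz0 hz1), ENNReal.ofReal_inv_of_pos two_pos,
          ENNReal.ofReal_ofNat, add_comm]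
        gcongr
        exact inv_two_le_volume_stdTri
    _ = volume (colMap !₂[1, 0] z '' stdTri) + volume (colMap z !₂[0, ε] '' stdTri) := by
        rw [volume_colMap_image, volume_colMap_image]
        congr 3
        · rw [← abs_of_nonneg hz1, abs_mul, hε, one_mul]
          simp [det2]
        · simp [det2, hε, abs_of_nonneg hz0]
    _ ≤ volume (colMap !₂[1, 0] z '' stdTri ∪ colMap z !₂[0, ε] '' stdTri) := by
      refine add_measure_le_measure_union_of_subset_halfSpaces volume hv ?_ ?_
      · rintro _ ⟨y, ⟨hy0, hy1, -⟩, rfl⟩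
        simp only [mem_ofPred_eq, colMap_apply, EuclideanSpace.inner_fin_two, PiLp.add_apply,
          PiLp.smul_apply, smul_eq_mul, Matrix.cons_val_zero, Matrix.cons_val_one]
        nlinarith [mul_nonneg hz1 hy0]
      · rintro _ ⟨y, ⟨hy0, hy1, -⟩, rfl⟩
        simp only [mem_ofPred_eq, colMap_apply, EuclideanSpace.inner_fin_two, PiLp.add_apply,
          PiLp.smul_apply, smul_eq_mul, Matrix.cons_val_zero, Matrix.cons_val_one]
        nlinarith [mul_nonneg hz0 hy1, hεε]
    _ ≤ volume (C ∩ quadrant ε) := measure_mono (union_subset h1 h2)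

theorem two_mul_add_le_volume_of_neg_mem {X : Set E2} (hX : ∀ x ∈ X, -x ∈ X) :
    2 * (volume (X ∩ quadrant 1) + volume (X ∩ quadrant (-1))) ≤ volume X := by
  set H := X ∩ {x : E2 | 0 ≤ x 0}
  have hH : volume (X ∩ quadrant 1) + volume (X ∩ quadrant (-1)) ≤ volume H :=
    calc _ ≤ volume (X ∩ quadrant 1 ∪ X ∩ quadrant (-1)) :=
          add_measure_le_measure_union_of_subset_halfSpaces volume (v := !₂[0, 1]) (by simp)
            (fun x hx => by simpa [EuclideanSpace.inner_fin_two] using hx.2.2)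
            (fun x hx => by simpa [EuclideanSpace.inner_fin_two] using hx.2.2)
      _ ≤ volume H :=
          measure_mono (union_subset (fun x hx => ⟨hx.1, hx.2.1⟩) fun x hx => ⟨hx.1, hx.2.1⟩)
  calc _ ≤ volume H + volume (-H) := by rw [Measure.measure_neg, ← two_mul]; gcongr
    _ ≤ volume (H ∪ -H) :=
        add_measure_le_measure_union_of_subset_halfSpaces volume (v := !₂[1, 0]) (by simp)
          (fun x hx => by simpa [EuclideanSpace.inner_fin_two] using hx.2)
          (fun x hx => by simpa [EuclideanSpace.inner_fin_two] using hx.2)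
    _ ≤ volume X :=
        measure_mono (union_subset inter_subset_left fun x hx => by simpa using hX _ hx.1)

theorem volume_inter_ne_top_of_subset_cube {B : Set E2} (hB : B ⊆ cube 2) (S : Set E2) :
    volume (B ∩ S) ≠ ⊤ :=
  ne_top_of_le_ne_top (by simp [volume_cube]) (measure_mono (inter_subset_left.trans hB))

theorem one_le_two_mul_toReal_volume_inter_quadrant {B : Set E2} (hB : Convex ℝ B) (h0 : 0 ∈ B)
    (he1 : !₂[1, 0] ∈ B) (hcube : B ⊆ cube 2) {ε : ℝ} (hε : |ε| = 1) (he2 : !₂[0, ε] ∈ B) :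
    1 ≤ 2 * (volume (B ∩ quadrant ε)).toReal := by
  have := le_volume_inter_quadrant hB h0 hε he1 he2 he1 (by simp [quadrant])
  rw [ENNReal.ofReal_le_iff_le_toReal (volume_inter_ne_top_of_subset_cube hcube _)] at this
  simp only [Fin.isValue, Matrix.cons_val_zero, Matrix.cons_val_one, Matrix.cons_val_fin_one,
    mul_zero, add_zero] at this
  linarith

theorem add_le_two_mul_toReal_volume_inter_quadrant {B : Set E2} (hB : Convex ℝ B) (h0 : 0 ∈ B)
    (he1 : !₂[1, 0] ∈ B) (hcube : B ⊆ cube 2) {ε : ℝ} (hε : |ε| = 1) (he2 : !₂[0, ε] ∈ B)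
    {a : E2} (ha : a ∈ B) :
    a 0 + ε * a 1 ≤ 2 * (volume (B ∩ quadrant ε)).toReal := by
  by_cases haQ : a ∈ quadrant ε
  · have := le_volume_inter_quadrant hB h0 hε he1 he2 ha haQ
    rw [ENNReal.ofReal_le_iff_le_toReal (volume_inter_ne_top_of_subset_cube hcube _)] at this
    linarith
  · have := one_le_two_mul_toReal_volume_inter_quadrant hB h0 he1 hcube hε he2
    have ha0 := abs_le.1 (hcube ha 0)
    have ha1 : |ε * a 1| ≤ 1 := by rw [abs_mul, hε, one_mul]; exact hcube ha 1
    simp only [quadrant, mem_ofPred_eq, not_and_or, not_le] at haQ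
    rcases haQ with h | h <;> linarith [(abs_le.1 ha1).2]

theorem ofReal_inv_le_volume_polarSet_inter_quadrant {B : Set E2} (hB : Convex ℝ B) (h0 : 0 ∈ B)
    (he1 : !₂[1, 0] ∈ B) (hcube : B ⊆ cube 2) {ε : ℝ} (hε : |ε| = 1) (he2 : !₂[0, ε] ∈ B) :
    ENNReal.ofReal (2 * (volume (B ∩ quadrant ε)).toReal)⁻¹ ≤
      volume (polarSet B ∩ quadrant ε) := by
  have hs := one_le_two_mul_toReal_volume_inter_quadrant hB h0 he1 hcube hε he2
  set c := (2 * (volume (B ∩ quadrant ε)).toReal)⁻¹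
  have hc : 0 ≤ c := inv_nonneg.2 (by linarith)
  have hεε : ε * ε = 1 := by rw [← abs_mul_abs_self, hε, one_mul]
  have hεa (a : E2) (ha : a ∈ B) : ε * a 1 ≤ 1 := by
    calc ε * a 1 ≤ |ε * a 1| := le_abs_self _
      _ ≤ 1 := by rw [abs_mul, hε, one_mul]; exact hcube ha 1
  have hw : !₂[c, ε * c] ∈ polarSet B := fun a ha => by
    have := add_le_two_mul_toReal_volume_inter_quadrant hB h0 he1 hcube hε he2 ha
    simp only [EuclideanSpace.inner_fin_two, Matrix.cons_val_zero, Matrix.cons_val_one]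
    calc c * a 0 + ε * c * a 1 = c * (a 0 + ε * a 1) := by ring
      _ ≤ c * (2 * (volume (B ∩ quadrant ε)).toReal) := mul_le_mul_of_nonneg_left this hc
      _ = 1 := inv_mul_cancel₀ (by linarith)
  have := le_volume_inter_quadrant (convex_polarSet B) (zero_mem_polarSet B) hε
    (fun a ha => by simpa [EuclideanSpace.inner_fin_two] using (abs_le.1 (hcube ha 0)).2)
    (fun a ha => by simpa [EuclideanSpace.inner_fin_two] using hεa a ha) hw
    (by simp [quadrant, hc, ← mul_assoc, hεε])
  simpa [← mul_assoc, hεε] using this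

theorem eight_le_volume_mul_volume_polarSet_of_subset_cube {B : Set E2} (hB : Convex ℝ B)
    (hsymm : ∀ a ∈ B, -a ∈ B) (he1 : !₂[1, 0] ∈ B) (he2 : !₂[0, 1] ∈ B) (hcube : B ⊆ cube 2) :
    8 ≤ volume B * volume (polarSet B) := by
  have h0 : 0 ∈ B := by
    simpa using hB he1 (hsymm _ he1) (by norm_num : (0 : ℝ) ≤ 1 / 2)
      (by norm_num : (0 : ℝ) ≤ 1 / 2) (by norm_num)
  have he2' : !₂[0, -1] ∈ B := by
    convert hsymm _ he2 using 1
    ext i; fin_cases i <;> simp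
  have hε₁ : |(1 : ℝ)| = 1 := abs_one
  have hε₂ : |(-1 : ℝ)| = 1 := by simp
  set s₁ := (volume (B ∩ quadrant 1)).toReal
  set s₂ := (volume (B ∩ quadrant (-1))).toReal
  have hs₁ : 1 ≤ 2 * s₁ := one_le_two_mul_toReal_volume_inter_quadrant hB h0 he1 hcube hε₁ he2
  have hs₂ : 1 ≤ 2 * s₂ := one_le_two_mul_toReal_volume_inter_quadrant hB h0 he1 hcube hε₂ he2'
  have hvolB : ENNReal.ofReal (2 * (s₁ + s₂)) ≤ volume B := by
    rw [ENNReal.ofReal_mul zero_le_two,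
      ENNReal.ofReal_add ENNReal.toReal_nonneg ENNReal.toReal_nonneg,
      ENNReal.ofReal_toReal (volume_inter_ne_top_of_subset_cube hcube _),
      ENNReal.ofReal_toReal (volume_inter_ne_top_of_subset_cube hcube _)]
    simpa using two_mul_add_le_volume_of_neg_mem hsymm
  have hvolP : ENNReal.ofReal (2 * ((2 * s₁)⁻¹ + (2 * s₂)⁻¹)) ≤ volume (polarSet B) := by
    rw [ENNReal.ofReal_mul zero_le_two, ENNReal.ofReal_add (by positivity) (by positivity)]
    calc _ ≤ 2 * (volume (polarSet B ∩ quadrant 1) + volume (polarSet B ∩ quadrant (-1))) := by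
          gcongr
          · simp
          · exact ofReal_inv_le_volume_polarSet_inter_quadrant hB h0 he1 hcube hε₁ he2
          · exact ofReal_inv_le_volume_polarSet_inter_quadrant hB h0 he1 hcube hε₂ he2'
      _ ≤ volume (polarSet B) :=
          two_mul_add_le_volume_of_neg_mem fun _ => neg_mem_polarSet hsymm
  have hreal : 8 ≤ 2 * (s₁ + s₂) * (2 * ((2 * s₁)⁻¹ + (2 * s₂)⁻¹)) := by
    have h₁ : 0 < s₁ := by linarith
    have h₂ : 0 < s₂ := by linarith
    rw [← sub_nonneg]
    have : 2 * (s₁ + s₂) * (2 * ((2 * s₁)⁻¹ + (2 * s₂)⁻¹)) - 8 =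
        2 * (s₁ - s₂) ^ 2 / (s₁ * s₂) := by
      field_simp; ring
    rw [this]; positivity
  calc (8 : ENNReal) = ENNReal.ofReal 8 := by norm_num
    _ ≤ ENNReal.ofReal (2 * (s₁ + s₂) * (2 * ((2 * s₁)⁻¹ + (2 * s₂)⁻¹))) :=
        ENNReal.ofReal_le_ofReal hreal
    _ = ENNReal.ofReal (2 * (s₁ + s₂)) * ENNReal.ofReal (2 * ((2 * s₁)⁻¹ + (2 * s₂)⁻¹)) :=
        ENNReal.ofReal_mul (by positivity)
    _ ≤ volume B * volume (polarSet B) := mul_le_mul' hvolB hvolP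

theorem zero_mem_interior_of_neg_mem {A : Set E2} (hA : Convex ℝ A) (hsymm : ∀ a ∈ A, -a ∈ A)
    (hint : (interior A).Nonempty) : (0 : E2) ∈ interior A := by
  obtain ⟨x, hx⟩ := hint
  simpa using hA.combo_interior_self_mem_interior hx (hsymm x (interior_subset hx))
    (by norm_num : (0 : ℝ) < 1 / 2) (by norm_num : (0 : ℝ) ≤ 1 / 2) (by norm_num)

theorem exists_det2_ne_zero_of_mem_nhds {A : Set E2} (hA : A ∈ 𝓝 0) :
    ∃ a ∈ A, ∃ b ∈ A, det2 a b ≠ 0 := by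
  have hsmul (v : E2) : ∀ᶠ t : ℝ in 𝓝[>] 0, t • v ∈ A :=
    nhdsWithin_le_nhds <| (continuous_id.smul continuous_const).tendsto' 0 0 (zero_smul ℝ v) hA
  obtain ⟨t, ⟨h1, h2⟩, ht⟩ :=
    ((hsmul !₂[1, 0]).and (hsmul !₂[0, 1])).and self_mem_nhdsWithin |>.exists
  exact ⟨_, h1, _, h2, by simp [det2, ht.ne']⟩

theorem exists_forall_abs_det2_le {A : Set E2} (hA : IsCompact A) (hne : A.Nonempty) :
    ∃ u ∈ A, ∃ v ∈ A, ∀ a ∈ A, ∀ b ∈ A, |det2 a b| ≤ |det2 u v| := by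
  obtain ⟨⟨u, v⟩, ⟨hu, hv⟩, hmax⟩ := (hA.prod hA).exists_isMaxOn (hne.prod hne)
    (Continuous.continuousOn (f := fun p : E2 × E2 => |det2 p.1 p.2|)
      (by unfold det2; fun_prop))
  exact ⟨u, hu, v, hv, fun a ha b hb => hmax (mk_mem_prod ha hb)⟩

theorem eight_le_volume_mul_volume_polarSet {A : Set E2} (hA : IsCompact A) (hconv : Convex ℝ A)
    (hsymm : ∀ a ∈ A, -a ∈ A) (hint : (interior A).Nonempty) :
    8 ≤ volume A * volume (polarSet A) := by
  obtain ⟨u, hu, v, hv, hmax⟩ := exists_forall_abs_det2_le hA (hint.mono interior_subset)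
  have huv : det2 u v ≠ 0 := by
    obtain ⟨a, ha, b, hb, hab⟩ := exists_det2_ne_zero_of_mem_nhds
      (mem_interior_iff_mem_nhds.1 (zero_mem_interior_of_neg_mem hconv hsymm hint))
    exact abs_pos.1 ((abs_pos.2 hab).trans_le (hmax a ha b hb))
  have hdet : LinearMap.det (colMap u v) ≠ 0 := by rwa [det_colMap]
  have hsurj : Function.Surjective (colMap u v) :=
    (LinearMap.equivOfDetNeZero _ hdet).surjective
  have hdetB (a b : E2) (ha : colMap u v a ∈ A) (hb : colMap u v b ∈ A) : |det2 a b| ≤ 1 := by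
    have := hmax _ ha _ hb
    rwa [det2_colMap, abs_mul, mul_le_iff_le_one_right (abs_pos.2 huv)] at this
  rw [← image_preimage_eq A hsurj, volume_mul_volume_polarSet_image hdet]
  refine eight_le_volume_mul_volume_polarSet_of_subset_cube (hconv.linear_preimage _)
    (fun a ha => by rw [mem_preimage, map_neg]; exact hsymm _ ha) (by simpa using hu)
    (by simpa using hv) fun a ha i => ?_
  fin_cases i
  · simpa [det2] using hdetB a !₂[0, 1] ha (by simpa using hv)
  · simpa [det2] using hdetB !₂[1, 0] a (by simpa using hu) ha

theorem polarSet_cube : polarSet (cube 2) = {x | |x 0| + |x 1| ≤ 1} := by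
  ext x
  simp only [polarSet, cube, mem_ofPred_eq, EuclideanSpace.inner_fin_two]
  refine ⟨fun hx => ?_, fun hx a ha => ?_⟩
  · simpa using hx !₂[SignType.sign (x 0), SignType.sign (x 1)] fun i => by
      fin_cases i <;>
        simp only [Fin.isValue, Fin.zero_eta, Fin.mk_one, Matrix.cons_val_zero,
          Matrix.cons_val_one] <;>
        rcases SignType.sign (x _) with _ | _ | _ <;> simp
  · calc x 0 * a 0 + x 1 * a 1 ≤ |x 0| * |a 0| + |x 1| * |a 1| := by
          rw [← abs_mul, ← abs_mul]; exact add_le_add (le_abs_self _) (le_abs_self _)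
      _ ≤ |x 0| + |x 1| := by
          gcongr <;> exact mul_le_of_le_one_right (abs_nonneg _) (ha _)
      _ ≤ 1 := hx

theorem volume_crossPolytope : volume {x : E2 | |x 0| + |x 1| ≤ 1} = 2 := by
  have : {x : E2 | |x 0| + |x 1| ≤ 1} = colMap !₂[2⁻¹, 2⁻¹] !₂[2⁻¹, -2⁻¹] '' cube 2 := by
    ext x
    refine ⟨fun hx => ⟨!₂[x 0 + x 1, x 0 - x 1], fun i => ?_, ?_⟩, ?_⟩
    · fin_cases i
      · simpa using (abs_add_le _ _).trans hx
      · simpa using (abs_sub _ _).trans hx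
    · ext i; fin_cases i <;> simp <;> ring
    · rintro ⟨y, hy, rfl⟩
      have h0 := abs_le.1 (hy 0)
      have h1 := abs_le.1 (hy 1)
      simp only [mem_ofPred_eq, colMap_apply, PiLp.add_apply, PiLp.smul_apply, smul_eq_mul,
        Fin.isValue, Matrix.cons_val_zero, Matrix.cons_val_one, Matrix.cons_val_fin_one, mul_neg]
      rcases abs_cases (y 0 * 2⁻¹ + y 1 * 2⁻¹) with ⟨e, -⟩ | ⟨e, -⟩ <;>
        rcases abs_cases (y 0 * 2⁻¹ + -(y 1 * 2⁻¹)) with ⟨e', -⟩ | ⟨e', -⟩ <;>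
        linarith
  have hdet : |det2 !₂[2⁻¹, 2⁻¹] !₂[2⁻¹, -2⁻¹]| = 2⁻¹ := by norm_num [det2]
  rw [this, volume_colMap_image, volume_cube, hdet, ← ENNReal.ofReal_ofNat 2,
    ← ENNReal.ofReal_pow zero_le_two, ← ENNReal.ofReal_mul (by norm_num)]
  norm_num

/-- The two-dimensional Mahler conjecture (Mahler's theorem): every centrally symmetric
convex body A in the plane satisfies M(A) ≥ 8 = M([-1,1]²). -/
theorem stmt15 (A : Set (EuclideanSpace ℝ (Fin 2)))
    (hA_compact : IsCompact A) (hA_conv : Convex ℝ A)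
    (hA_int : (interior A).Nonempty) (hA_symm : A = -A) :
    8 ≤ volume A * volume (polarSet A) ∧
    volume {x : EuclideanSpace ℝ (Fin 2) | ∀ i, |x i| ≤ 1} *
      volume (polarSet {x : EuclideanSpace ℝ (Fin 2) | ∀ i, |x i| ≤ 1}) = 8 := by
  refine ⟨eight_le_volume_mul_volume_polarSet hA_compact hA_conv
    (fun a ha => hA_symm ▸ neg_mem_neg.2 ha) hA_int, ?_⟩
  change volume (cube 2) * volume (polarSet (cube 2)) = 8
  rw [volume_cube, polarSet_cube, volume_crossPolytope]
  norm_num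
end
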